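/- arXiv:2301.07530 — 2 statements merged into one kernel-verified Lean document; each statement's English description precedes it below -/
import Mathlib

section
/- Let K ⊆ ℝ^d be a convex set of diameter at most D > 0, T ≥ 4, λ, G > 0, and let ℓ₁, …, ℓ_T : ℝ^d → ℝ be differentiable functions that are λ-strongly convex on K in the paper's convention (ℓ_t(μ) − ℓ_t(μ₀) ≤ ⟨∇ℓ_t(μ), μ − μ₀⟩ − λ‖μ − μ₀‖² for μ, μ₀ ∈ K) with ‖∇ℓ_t(x)‖ ≤ G for all x ∈ K. Set α := λ/G², γ := (1/2)·min(1/(G·D), α), ε := 1/(γ²D²). Write ∇_t := ∇ℓ_t(μ̂_t), A₀ := ε·I_d, A_t := A_{t−1} + ∇_t∇_tᵀ, μ̂_{temp,t+1} := μ̂_t − (1/γ)·A_t⁻¹∇_t. Suppose μ̂₁,…, μ̂_{T+1} ∈ K satisfy, for every 1 ≤ t ≤ T, the ADJUST contraction (μ̂_{t+1} − ν_{t+1})ᵀ A_t (μ̂_{t+1} − ν_{t+1}) ≤ (μ̂_{temp,t+1} − ν_t)ᵀ A_t (μ̂_{temp,t+1} − ν_t), and suppose ν₁, …, ν_{T+1}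 ∈ K satisfy ℓ_t(ν_{t+1}) − ℓ_t(μ*_t) ≤ G²(1 + log T)/(λT) for every t, where μ*_t ∈ K minimises ℓ_t over K. Then Σ_{t=1}^{T} ℓ_t(μ̂_t) − Σ_{t=1}^{T} ℓ_t(μ*_t) ≤ G·Σ_{t=1}^{T}‖ν_{t+1} − ν_t‖ − λ·Σ_{t=1}^{T}‖ν_{t+1} − ν_t‖² + 2·((G²/λ)(d+1) + d·G·D)·(1 + log T). -/
/-!
Split the regret as
`∑ (ℓ_t(μ̂_t) - ℓ_t(ν_t)) + ∑ (ℓ_t(ν_t) - ℓ_t(ν_{t+1})) + ∑ (ℓ_t(ν_{t+1}) - ℓ_t(μ*_t))`.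
The last sum is the advice error, at most `(G²/λ)(1 + log T)`, and each drift term is at most
`G‖ν_{t+1} - ν_t‖ - λ‖ν_{t+1} - ν_t‖²` by strong convexity at `ν_t` and Cauchy–Schwarz.

The first sum is online Newton step against the moving comparator `ν`. As `γG² ≤ λ/2`, strong
convexity gives the exp-concave surrogate `⟨∇_t, x_t⟩ - (γ/2)⟨∇_t, x_t⟩²` with `x_t = μ̂_t - ν_t`,
and the ADJUST contraction bounds it by `(γ/2)(Φ_{t-1} - Φ_t) + (1/(2γ)) ∇_tᵀ A_t⁻¹ ∇_t` for the
potential `Φ_t = x_{t+1}ᵀ A_t x_{t+1}`. The potential telescopes to at most `(γ/2) ε d D² = d/(2γ)`;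
by the matrix determinant lemma `∇_tᵀ A_t⁻¹ ∇_t ≤ log det A_t - log det A_{t-1}`, which telescopes
to at most `d log T` because `tr A_T ≤ d T ε`. Finally `1/(2γ) ≤ GD + G²/λ`.
Squared norms are bounded coordinatewise (`‖x‖² ≤ d · max_i x_i²`), so the factor `d` also comes
out right when `d = 0`.
-/

open Matrix RealInnerProductSpace Finset

theorem Finset.sum_Icc_one_sub_pred {M : Type*} [AddCommGroup M] (f : ℕ → M) (n : ℕ) :
    ∑ t ∈ Icc 1 n, (f t - f (t - 1)) = f n - f 0 := by
  induction n with
  | zero => simp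
  | succ n ih => rw [sum_Icc_succ_top (Nat.le_add_left 1 n), ih, Nat.add_sub_cancel]; abel

namespace Matrix

variable {ι : Type*} [Fintype ι]

theorem det_sub_vecMulVec [DecidableEq ι] {R : Type*} [CommRing R] {M : Matrix ι ι R}
    (hM : IsUnit M.det) (u v : ι → R) : (M - vecMulVec u v).det = M.det * (1 - v ⬝ᵥ M⁻¹ *ᵥ u) := by
  have : M - vecMulVec u v = M + replicateCol Unit (-u) * replicateRow Unit v := by
    rw [← vecMulVec_eq, neg_vecMulVec, sub_eq_add_neg]
  rw [this, det_add_replicateCol_mul_replicateRow hM, det_unique (n := Unit), dotProduct_mulVec]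
  simp [Matrix.mul_apply, sub_eq_add_neg, dotProduct, vecMul]

theorem dotProduct_vecMulVec_self_mulVec (u x : ι → ℝ) :
    x ⬝ᵥ vecMulVec u u *ᵥ x = (u ⬝ᵥ x) ^ 2 := by
  rw [vecMulVec_mulVec, op_smul_eq_smul, dotProduct_smul, smul_eq_mul, dotProduct_comm x, sq]

theorem PosDef.add_vecMulVec_self {B : Matrix ι ι ℝ} (hB : B.PosDef) (u : ι → ℝ) :
    (B + vecMulVec u u).PosDef :=
  hB.add_posSemidef (by simpa using posSemidef_vecMulVec_self_star u)

theorem PosDef.dotProduct_inv_mulVec_le_log_det_sub [DecidableEq ι] {B : Matrix ι ι ℝ}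
    (hB : B.PosDef) (u : ι → ℝ) :
    u ⬝ᵥ (B + vecMulVec u u)⁻¹ *ᵥ u ≤ Real.log (B + vecMulVec u u).det - Real.log B.det := by
  set M := B + vecMulVec u u
  have hM : 0 < M.det := (hB.add_vecMulVec_self u).det_pos
  have hdet : B.det = M.det * (1 - u ⬝ᵥ M⁻¹ *ᵥ u) := by
    rw [← det_sub_vecMulVec hM.ne'.isUnit, add_sub_cancel_right]
  have hpos : 0 < 1 - u ⬝ᵥ M⁻¹ *ᵥ u := pos_of_mul_pos_right (hdet ▸ hB.det_pos) hM.le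
  rw [hdet, Real.log_mul hM.ne' hpos.ne']
  linarith [Real.log_le_sub_one_of_pos hpos]

/-- Summing the tangent-line bound `log (e / c) ≤ e / c - 1` over the eigenvalues `e` of `M`. -/
theorem PosDef.log_det_le_card_mul_log [DecidableEq ι] {M : Matrix ι ι ℝ} (hM : M.PosDef)
    {c : ℝ} (hc : 0 < c) (htr : M.trace ≤ Fintype.card ι * c) :
    Real.log M.det ≤ Fintype.card ι * Real.log c := by
  set e := hM.1.eigenvalues
  have htangent : ∀ i, Real.log (e i) ≤ Real.log c + (e i / c - 1) := fun i => by
    have := Real.log_le_sub_one_of_pos (div_pos (hM.eigenvalues_pos i) hc)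
    rw [Real.log_div (hM.eigenvalues_pos i).ne' hc.ne'] at this
    linarith
  have htr' : ∑ i, e i / c ≤ Fintype.card ι := by
    rw [← sum_div, div_le_iff₀ hc]
    simpa [hM.1.trace_eq_sum_eigenvalues] using htr
  rw [hM.1.det_eq_prod_eigenvalues]
  simp only [RCLike.ofReal_real_eq_id, id_eq]
  rw [Real.log_prod fun i _ => (hM.eigenvalues_pos i).ne']
  calc ∑ i, Real.log (e i) ≤ ∑ i, (Real.log c + (e i / c - 1)) := sum_le_sum fun i _ => htangent i
    _ ≤ Fintype.card ι * Real.log c := by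
      simp only [sum_add_distrib, sum_sub_distrib, sum_const, card_univ, nsmul_eq_mul, mul_one]
      linarith

theorem IsHermitian.dotProduct_mulVec_comm {A : Matrix ι ι ℝ} (hA : A.IsHermitian) (x y : ι → ℝ) :
    x ⬝ᵥ A *ᵥ y = y ⬝ᵥ A *ᵥ x := by
  rw [dotProduct_mulVec, ← mulVec_transpose, ← conjTranspose_eq_transpose_of_trivial, hA.eq,
    dotProduct_comm]

theorem IsHermitian.dotProduct_mulVec_sub_smul_inv_mulVec [DecidableEq ι] {A : Matrix ι ι ℝ}
    (hA : A.IsHermitian) (hdet : IsUnit A.det) (x u : ι → ℝ) (c : ℝ) :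
    (x - c • A⁻¹ *ᵥ u) ⬝ᵥ A *ᵥ (x - c • A⁻¹ *ᵥ u) =
      x ⬝ᵥ A *ᵥ x - 2 * c * (u ⬝ᵥ x) + c ^ 2 * (u ⬝ᵥ A⁻¹ *ᵥ u) := by
  have hAu : A *ᵥ (A⁻¹ *ᵥ u) = u := by
    rw [mulVec_mulVec, mul_nonsing_inv _ hdet, one_mulVec]
  rw [mulVec_sub, mulVec_smul, hAu, sub_dotProduct, dotProduct_sub, dotProduct_sub,
    smul_dotProduct, smul_dotProduct, dotProduct_smul, dotProduct_smul,
    hA.dotProduct_mulVec_comm (A⁻¹ *ᵥ u) x, hAu, dotProduct_comm x u, dotProduct_comm _ u]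
  simp only [smul_eq_mul]
  ring

theorem ons_step_le [DecidableEq ι] {A B : Matrix ι ι ℝ} {u x y : ι → ℝ} {γ : ℝ} (hγ : 0 < γ)
    (hB : B.PosDef) (hAB : A = B + vecMulVec u u)
    (hy : y ⬝ᵥ A *ᵥ y ≤ (x - (1 / γ) • A⁻¹ *ᵥ u) ⬝ᵥ A *ᵥ (x - (1 / γ) • A⁻¹ *ᵥ u)) :
    u ⬝ᵥ x - γ / 2 * (u ⬝ᵥ x) ^ 2 ≤
      γ / 2 * (x ⬝ᵥ B *ᵥ x - y ⬝ᵥ A *ᵥ y) + 1 / (2 * γ) * (u ⬝ᵥ A⁻¹ *ᵥ u) := by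
  have hA : A.PosDef := hAB ▸ hB.add_vecMulVec_self u
  rw [hA.1.dotProduct_mulVec_sub_smul_inv_mulVec hA.det_pos.ne'.isUnit] at hy
  conv at hy => rhs; rw [hAB, add_mulVec, dotProduct_add, dotProduct_vecMulVec_self_mulVec, ← hAB]
  have hscaled := mul_le_mul_of_nonneg_left hy (by positivity : 0 ≤ γ / 2)
  have hexpand : γ / 2 * (x ⬝ᵥ B *ᵥ x + (u ⬝ᵥ x) ^ 2 - 2 * (1 / γ) * (u ⬝ᵥ x) +
      (1 / γ) ^ 2 * (u ⬝ᵥ A⁻¹ *ᵥ u)) =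
      γ / 2 * (x ⬝ᵥ B *ᵥ x + (u ⬝ᵥ x) ^ 2) - u ⬝ᵥ x + 1 / (2 * γ) * (u ⬝ᵥ A⁻¹ *ᵥ u) := by
    field_simp
  linarith

theorem posDef_of_add_vecMulVec {A : ℕ → Matrix ι ι ℝ} {u : ℕ → ι → ℝ} {T : ℕ}
    (hA0 : (A 0).PosDef) (hArec : ∀ t ∈ Icc 1 T, A t = A (t - 1) + vecMulVec (u t) (u t)) :
    ∀ t ≤ T, (A t).PosDef := by
  intro t
  induction t with
  | zero => exact fun _ => hA0
  | succ t ih =>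
    intro ht
    rw [hArec (t + 1) (mem_Icc.mpr ⟨by omega, ht⟩), Nat.add_sub_cancel]
    exact (ih (by omega)).add_vecMulVec_self _

theorem ons_surrogate_regret_le [DecidableEq ι] {A : ℕ → Matrix ι ι ℝ} {u p ν : ℕ → ι → ℝ} {γ : ℝ}
    {T : ℕ} (hγ : 0 < γ) (hA0 : (A 0).PosDef)
    (hArec : ∀ t ∈ Icc 1 T, A t = A (t - 1) + vecMulVec (u t) (u t))
    (hadj : ∀ t ∈ Icc 1 T, (p (t + 1) - ν (t + 1)) ⬝ᵥ A t *ᵥ (p (t + 1) - ν (t + 1)) ≤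
      (p t - (1 / γ) • (A t)⁻¹ *ᵥ u t - ν t) ⬝ᵥ A t *ᵥ (p t - (1 / γ) • (A t)⁻¹ *ᵥ u t - ν t)) :
    ∑ t ∈ Icc 1 T, (u t ⬝ᵥ (p t - ν t) - γ / 2 * (u t ⬝ᵥ (p t - ν t)) ^ 2) ≤
      γ / 2 * ((p 1 - ν 1) ⬝ᵥ A 0 *ᵥ (p 1 - ν 1)) +
        1 / (2 * γ) * (Real.log (A T).det - Real.log (A 0).det) := by
  have hPD := posDef_of_add_vecMulVec hA0 hArec
  set Φ : ℕ → ℝ := fun s => (p (s + 1) - ν (s + 1)) ⬝ᵥ A s *ᵥ (p (s + 1) - ν (s + 1))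
  set L : ℕ → ℝ := fun s => Real.log (A s).det
  have hstep : ∀ t ∈ Icc 1 T, u t ⬝ᵥ (p t - ν t) - γ / 2 * (u t ⬝ᵥ (p t - ν t)) ^ 2 ≤
      γ / 2 * (Φ (t - 1) - Φ t) + 1 / (2 * γ) * (L t - L (t - 1)) := fun t ht => by
    obtain ⟨ht1, htT⟩ := mem_Icc.mp ht
    have hB := hPD (t - 1) (by omega)
    have hΦ : Φ (t - 1) = (p t - ν t) ⬝ᵥ A (t - 1) *ᵥ (p t - ν t) := by
      simp only [Φ, Nat.sub_add_cancel ht1]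
    have hR := hB.dotProduct_inv_mulVec_le_log_det_sub (u t)
    rw [← hArec t ht] at hR
    rw [hΦ]
    refine (ons_step_le (y := p (t + 1) - ν (t + 1)) hγ hB (hArec t ht) ?_).trans ?_
    · simpa only [sub_right_comm] using hadj t ht
    · gcongr
  have hΦT : 0 ≤ Φ T := by simpa using (hPD T le_rfl).posSemidef.dotProduct_mulVec_nonneg _
  calc _ ≤ ∑ t ∈ Icc 1 T, (γ / 2 * (Φ (t - 1) - Φ t) + 1 / (2 * γ) * (L t - L (t - 1))) :=
        sum_le_sum hstep
    _ = γ / 2 * (Φ 0 - Φ T) + 1 / (2 * γ) * (L T - L 0) := by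
        have hΦsum := sum_Icc_one_sub_pred (fun s => -Φ s) T
        simp only [neg_sub_neg] at hΦsum
        rw [sum_add_distrib, ← mul_sum, ← mul_sum, hΦsum, sum_Icc_one_sub_pred]
    _ ≤ _ := by
        have := mul_nonneg (half_pos hγ).le hΦT
        simp only [Φ, L, zero_add] at this ⊢
        linarith

theorem log_det_sub_le_card_mul_log [DecidableEq ι] {A : ℕ → Matrix ι ι ℝ} {u : ℕ → ι → ℝ}
    {ε : ℝ} {T : ℕ} (hε : 0 < ε) (hT : 2 ≤ T) (hA0 : A 0 = ε • 1)
    (hArec : ∀ t ∈ Icc 1 T, A t = A (t - 1) + vecMulVec (u t) (u t))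
    (hu : ∀ t ∈ Icc 1 T, u t ⬝ᵥ u t ≤ Fintype.card ι * (ε / 2)) :
    Real.log (A T).det - Real.log (A 0).det ≤ Fintype.card ι * Real.log T := by
  have hA0pd : (A 0).PosDef := hA0 ▸ PosDef.one.smul hε
  have htr : ∀ t ≤ T, (A t).trace ≤ Fintype.card ι * (ε + t * (ε / 2)) := by
    intro t
    induction t with
    | zero => simp [hA0, mul_comm]
    | succ t ih =>
      intro ht
      have hmem : t + 1 ∈ Icc 1 T := mem_Icc.mpr ⟨by omega, ht⟩
      rw [hArec _ hmem, Nat.add_sub_cancel, trace_add, trace_vecMulVec]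
      push_cast
      linarith [ih (by omega), hu _ hmem]
  have hT' : (2 : ℝ) ≤ T := by exact_mod_cast hT
  have hTε : (A T).trace ≤ Fintype.card ι * (T * ε) :=
    (htr T le_rfl).trans (mul_le_mul_of_nonneg_left (by nlinarith) (Nat.cast_nonneg _))
  have hlog := (posDef_of_add_vecMulVec hA0pd hArec T le_rfl).log_det_le_card_mul_log
    (by positivity) hTε
  rw [Real.log_mul (by positivity) hε.ne'] at hlog
  rw [hA0, det_smul, det_one, mul_one, Real.log_pow]
  linarith

end Matrix

theorem EuclideanSpace.norm_sq_le_card_mul_sq {ι : Type*} [Fintype ι] {x : EuclideanSpace ℝ ι}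
    {r : ℝ} (hx : ‖x‖ ≤ r) : ‖x‖ ^ 2 ≤ Fintype.card ι * r ^ 2 := by
  rw [EuclideanSpace.norm_sq_eq]
  calc ∑ i, ‖x i‖ ^ 2 ≤ ∑ _i : ι, r ^ 2 :=
        sum_le_sum fun i _ => by gcongr; exact (PiLp.norm_apply_le x i).trans hx
    _ = Fintype.card ι * r ^ 2 := by simp

theorem EuclideanSpace.dotProduct_eq_inner {ι : Type*} [Fintype ι] (x y : EuclideanSpace ℝ ι) :
    x.ofLp ⬝ᵥ y.ofLp = ⟪x, y⟫ := by
  rw [EuclideanSpace.inner_eq_star_dotProduct, star_trivial, dotProduct_comm]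

section StrongConvexity

variable {E : Type*} [NormedAddCommGroup E] [InnerProductSpace ℝ E] {f : E → ℝ} {g x y : E}
  {lam G : ℝ}

theorem sub_le_inner_sub_sq_of_strongConvex {γ : ℝ}
    (hsc : f x - f y ≤ ⟪g, x - y⟫ - lam * ‖x - y‖ ^ 2) (hg : ‖g‖ ≤ G) (hγ : 0 ≤ γ)
    (hγG : γ * G ^ 2 ≤ 2 * lam) :
    f x - f y ≤ ⟪g, x - y⟫ - γ / 2 * ⟪g, x - y⟫ ^ 2 := by
  have hcs : ⟪g, x - y⟫ ^ 2 ≤ G ^ 2 * ‖x - y‖ ^ 2 := by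
    rw [← mul_pow, ← sq_abs]
    gcongr
    exact (abs_real_inner_le_norm _ _).trans (by gcongr)
  have := mul_le_mul_of_nonneg_right hγG (sq_nonneg ‖x - y‖)
  nlinarith

theorem sub_le_of_strongConvex (hsc : f x - f y ≤ ⟪g, x - y⟫ - lam * ‖x - y‖ ^ 2)
    (hg : ‖g‖ ≤ G) : f x - f y ≤ G * ‖y - x‖ - lam * ‖y - x‖ ^ 2 := by
  have := (real_inner_le_norm g (x - y)).trans (mul_le_mul_of_nonneg_right hg (norm_nonneg _))
  rw [norm_sub_rev] at this hsc
  linarith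

end StrongConvexity

theorem ons_step_size_bounds {lam G D γ : ℝ} (hlam : 0 < lam) (hG : 0 < G) (hD : 0 < D)
    (hγ : γ = 1 / 2 * min (1 / (G * D)) (lam / G ^ 2)) :
    0 < γ ∧ γ * G ^ 2 ≤ 2 * lam ∧ 2 * G ^ 2 ≤ 1 / (γ ^ 2 * D ^ 2) ∧
      1 / (2 * γ) ≤ G * D + G ^ 2 / lam := by
  have hγ0 : 0 < γ := by rw [hγ]; positivity
  have hγD : γ * (G * D) ≤ 1 / 2 := by
    have := min_le_left (1 / (G * D)) (lam / G ^ 2)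
    rw [hγ]; field_simp at this ⊢; nlinarith
  have hγlam : γ * G ^ 2 ≤ lam / 2 := by
    have := min_le_right (1 / (G * D)) (lam / G ^ 2)
    rw [hγ]; field_simp at this ⊢; nlinarith
  refine ⟨hγ0, by linarith, ?_, ?_⟩
  · rw [le_div_iff₀ (by positivity)]
    nlinarith [mul_pos hγ0 (mul_pos hG hD)]
  · rcases min_cases (1 / (G * D)) (lam / G ^ 2) with ⟨h, -⟩ | ⟨h, -⟩ <;>
      rw [hγ, h] <;> field_simp <;> nlinarith [mul_pos hD hlam]

theorem ons_regret_le {ι : Type*} [Fintype ι] [DecidableEq ι]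
    {K : Set (EuclideanSpace ℝ ι)} {D lam G γ ε : ℝ} {T : ℕ}
    {ℓ : ℕ → EuclideanSpace ℝ ι → ℝ} {g : ℕ → EuclideanSpace ℝ ι → EuclideanSpace ℝ ι}
    {p ν : ℕ → EuclideanSpace ℝ ι} {A : ℕ → Matrix ι ι ℝ}
    (hD : 0 < D) (hdiam : ∀ x ∈ K, ∀ y ∈ K, ‖x - y‖ ≤ D) (hT : 2 ≤ T)
    (hsc : ∀ t ∈ Icc 1 T, ∀ μ ∈ K, ∀ μ₀ ∈ K,
      ℓ t μ - ℓ t μ₀ ≤ ⟪g t μ, μ - μ₀⟫ - lam * ‖μ - μ₀‖ ^ 2)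
    (hGb : ∀ t ∈ Icc 1 T, ∀ x ∈ K, ‖g t x‖ ≤ G)
    (hγ : 0 < γ) (hγG : γ * G ^ 2 ≤ 2 * lam) (hε : ε = 1 / (γ ^ 2 * D ^ 2)) (hGε : 2 * G ^ 2 ≤ ε)
    (hpK : ∀ t ∈ Icc 1 T, p t ∈ K) (hνK : ∀ t ∈ Icc 1 T, ν t ∈ K)
    (hA0 : A 0 = ε • 1)
    (hArec : ∀ t ∈ Icc 1 T, A t = A (t - 1) + vecMulVec (g t (p t) : ι → ℝ) (g t (p t) : ι → ℝ))
    (hadj : ∀ t ∈ Icc 1 T,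
      (p (t + 1) - ν (t + 1)) ⬝ᵥ (A t).mulVec (p (t + 1) - ν (t + 1)) ≤
      ((p t - (1 / γ) • (EuclideanSpace.equiv ι ℝ).symm ((A t)⁻¹.mulVec (g t (p t)))) - ν t)
        ⬝ᵥ (A t).mulVec
          ((p t - (1 / γ) • (EuclideanSpace.equiv ι ℝ).symm ((A t)⁻¹.mulVec (g t (p t)))) - ν t)) :
    ∑ t ∈ Icc 1 T, (ℓ t (p t) - ℓ t (ν t)) ≤ Fintype.card ι / (2 * γ) * (1 + Real.log T) := by
  have hεpos : 0 < ε := by rw [hε]; positivity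
  have hloss : ∀ t ∈ Icc 1 T, ℓ t (p t) - ℓ t (ν t) ≤
      (g t (p t)).ofLp ⬝ᵥ ((p t).ofLp - (ν t).ofLp) -
        γ / 2 * ((g t (p t)).ofLp ⬝ᵥ ((p t).ofLp - (ν t).ofLp)) ^ 2 := fun t ht => by
    have := sub_le_inner_sub_sq_of_strongConvex (hsc t ht _ (hpK t ht) _ (hνK t ht))
      (hGb t ht _ (hpK t ht)) hγ.le hγG
    rwa [← EuclideanSpace.dotProduct_eq_inner, WithLp.ofLp_sub] at this
  have hregret := ons_surrogate_regret_le (p := fun t => (p t).ofLp) (ν := fun t => (ν t).ofLp)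
    hγ (hA0 ▸ PosDef.one.smul hεpos) hArec fun t ht => by
    simpa only [WithLp.ofLp_sub, WithLp.ofLp_smul, PiLp.continuousLinearEquiv_symm_apply]
      using hadj t ht
  have hlogdet := log_det_sub_le_card_mul_log hεpos hT hA0 hArec fun t ht => by
    rw [EuclideanSpace.dotProduct_eq_inner, real_inner_self_eq_norm_sq]
    nlinarith [EuclideanSpace.norm_sq_le_card_mul_sq (hGb t ht _ (hpK t ht)),
      (Nat.cast_nonneg (Fintype.card ι) : (0 : ℝ) ≤ _)]
  have hΦ0 : ((p 1).ofLp - (ν 1).ofLp) ⬝ᵥ A 0 *ᵥ ((p 1).ofLp - (ν 1).ofLp) ≤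
      ε * (Fintype.card ι * D ^ 2) := by
    have h1 : (1 : ℕ) ∈ Icc 1 T := mem_Icc.mpr ⟨le_rfl, by omega⟩
    rw [hA0, smul_mulVec, one_mulVec, dotProduct_smul, ← WithLp.ofLp_sub,
      EuclideanSpace.dotProduct_eq_inner, real_inner_self_eq_norm_sq, smul_eq_mul]
    gcongr
    exact EuclideanSpace.norm_sq_le_card_mul_sq (hdiam _ (hpK 1 h1) _ (hνK 1 h1))
  calc ∑ t ∈ Icc 1 T, (ℓ t (p t) - ℓ t (ν t))
      ≤ γ / 2 * (ε * (Fintype.card ι * D ^ 2)) + 1 / (2 * γ) * (Fintype.card ι * Real.log T) :=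
        (sum_le_sum hloss).trans (hregret.trans (by gcongr))
    _ = Fintype.card ι / (2 * γ) * (1 + Real.log T) := by
        rw [hε]; field_simp

theorem dons_dynamic_regret_general {d : ℕ}
    (K : Set (EuclideanSpace ℝ (Fin d)))
    (D : ℝ) (hD : 0 < D) (hdiam : ∀ x ∈ K, ∀ y ∈ K, ‖x - y‖ ≤ D)
    (T : ℕ) (hT : 4 ≤ T) (lam G : ℝ) (hlam : 0 < lam) (hG : 0 < G)
    (ℓ : ℕ → EuclideanSpace ℝ (Fin d) → ℝ)
    (g : ℕ → EuclideanSpace ℝ (Fin d) → EuclideanSpace ℝ (Fin d))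
    (hsc : ∀ t ∈ Icc 1 T, ∀ μ ∈ K, ∀ μ₀ ∈ K,
      ℓ t μ - ℓ t μ₀ ≤ ⟪g t μ, μ - μ₀⟫ - lam * ‖μ - μ₀‖ ^ 2)
    (hGb : ∀ t ∈ Icc 1 T, ∀ x ∈ K, ‖g t x‖ ≤ G)
    (α γ ε : ℝ) (hα : α = lam / G ^ 2)
    (hγ : γ = 1 / 2 * min (1 / (G * D)) α) (hε : ε = 1 / (γ ^ 2 * D ^ 2))
    (p ν : ℕ → EuclideanSpace ℝ (Fin d))
    (hpK : ∀ t ∈ Icc 1 (T + 1), p t ∈ K) (hνK : ∀ t ∈ Icc 1 (T + 1), ν t ∈ K)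
    (A : ℕ → Matrix (Fin d) (Fin d) ℝ)
    (hA0 : A 0 = ε • 1)
    (hArec : ∀ t ∈ Icc 1 T,
      A t = A (t - 1) + Matrix.vecMulVec (g t (p t) : Fin d → ℝ) (g t (p t) : Fin d → ℝ))
    (hadj : ∀ t ∈ Icc 1 T,
      (p (t + 1) - ν (t + 1)) ⬝ᵥ (A t).mulVec (p (t + 1) - ν (t + 1)) ≤
      ((p t - (1 / γ) • (EuclideanSpace.equiv (Fin d) ℝ).symm ((A t)⁻¹.mulVec (g t (p t)))) - ν t)
        ⬝ᵥ (A t).mulVec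
          ((p t - (1 / γ) • (EuclideanSpace.equiv (Fin d) ℝ).symm ((A t)⁻¹.mulVec (g t (p t))))
            - ν t))
    (μstar : ℕ → EuclideanSpace ℝ (Fin d))
    (hνgood : ∀ t ∈ Icc 1 T,
      ℓ t (ν (t + 1)) - ℓ t (μstar t) ≤ G ^ 2 * (1 + Real.log T) / (lam * T)) :
    ∑ t ∈ Icc 1 T, ℓ t (p t) - ∑ t ∈ Icc 1 T, ℓ t (μstar t) ≤
      G * ∑ t ∈ Icc 1 T, ‖ν (t + 1) - ν t‖ - lam * ∑ t ∈ Icc 1 T, ‖ν (t + 1) - ν t‖ ^ 2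
        + 2 * (G ^ 2 / lam * (d + 1) + d * G * D) * (1 + Real.log T) := by
  obtain ⟨hγ0, hγG, hGε, hγinv⟩ := ons_step_size_bounds hlam hG hD (hα ▸ hγ)
  have hIcc : Icc 1 T ⊆ Icc 1 (T + 1) := Icc_subset_Icc_right T.le_succ
  have hons := ons_regret_le hD hdiam (by omega) hsc hGb hγ0 hγG hε (hε ▸ hGε)
    (fun t ht => hpK t (hIcc ht)) (fun t ht => hνK t (hIcc ht)) hA0 hArec hadj
  have hdrift := sum_le_sum fun t ht => sub_le_of_strongConvex
    (hsc t ht _ (hνK t (hIcc ht)) _ (hνK (t + 1) (by simp only [mem_Icc] at ht ⊢; omega)))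
    (hGb t ht _ (hνK t (hIcc ht)))
  have hadv : ∑ t ∈ Icc 1 T, (ℓ t (ν (t + 1)) - ℓ t (μstar t)) ≤
      G ^ 2 / lam * (1 + Real.log T) := by
    refine (sum_le_sum hνgood).trans_eq ?_
    rw [sum_const, Nat.card_Icc, nsmul_eq_mul, Nat.add_sub_cancel]
    field_simp
  have hlog : 0 ≤ 1 + Real.log T := by positivity
  have hγd : (d : ℝ) / (2 * γ) * (1 + Real.log T) ≤
      d * (G * D + G ^ 2 / lam) * (1 + Real.log T) := by
    rw [← mul_one_div]; gcongr
  have hslack : 0 ≤ (1 + Real.log T) * (d * (G ^ 2 / lam) + G ^ 2 / lam + d * (G * D)) := by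
    positivity
  simp only [sum_sub_distrib, ← mul_sum, Fintype.card_fin] at hons hdrift hadv
  linear_combination hons + hγd + hdrift + hadv + hslack

/-- Theorem 3 (dynamic regret of Dynamic ONS against the true minimisers): for `λ`-strongly
convex losses (paper's convention) with `G`-bounded gradients, with `α = λ/G²`,
`γ = (1/2)min(1/(GD), α)`, `ε = 1/(γ²D²)`, ONS matrices `A_t`, ADJUST contraction in the
`A_t`-norm, and advice `ν` satisfying `ℓ_t(ν_{t+1}) − ℓ_t(μ*_t) ≤ G²(1 + log T)/(λT)`, we get
`Σℓ_t(μ̂_t) − Σℓ_t(μ*_t) ≤ G·P_T(ν) − λ·S_T(ν) + 2((G²/λ)(d+1) + dGD)(1 + log T)`. -/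
theorem dons_dynamic_regret {d : ℕ}
    (K : Set (EuclideanSpace ℝ (Fin d))) (hK : Convex ℝ K)
    (D : ℝ) (hD : 0 < D) (hdiam : ∀ x ∈ K, ∀ y ∈ K, ‖x - y‖ ≤ D)
    (T : ℕ) (hT : 4 ≤ T) (lam G : ℝ) (hlam : 0 < lam) (hG : 0 < G)
    (ℓ : ℕ → EuclideanSpace ℝ (Fin d) → ℝ)
    (g : ℕ → EuclideanSpace ℝ (Fin d) → EuclideanSpace ℝ (Fin d))
    (hdiff : ∀ t, ∀ x, HasGradientAt (ℓ t) (g t x) x)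
    (hsc : ∀ t ∈ Icc 1 T, ∀ μ ∈ K, ∀ μ₀ ∈ K,
      ℓ t μ - ℓ t μ₀ ≤ ⟪g t μ, μ - μ₀⟫ - lam * ‖μ - μ₀‖ ^ 2)
    (hGb : ∀ t ∈ Icc 1 T, ∀ x ∈ K, ‖g t x‖ ≤ G)
    (α γ ε : ℝ) (hα : α = lam / G ^ 2)
    (hγ : γ = 1 / 2 * min (1 / (G * D)) α) (hε : ε = 1 / (γ ^ 2 * D ^ 2))
    (p ν : ℕ → EuclideanSpace ℝ (Fin d))
    (hpK : ∀ t ∈ Icc 1 (T + 1), p t ∈ K) (hνK : ∀ t ∈ Icc 1 (T + 1), ν t ∈ K)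
    (A : ℕ → Matrix (Fin d) (Fin d) ℝ)
    (hA0 : A 0 = ε • 1)
    (hArec : ∀ t ∈ Icc 1 T,
      A t = A (t - 1) + Matrix.vecMulVec (g t (p t) : Fin d → ℝ) (g t (p t) : Fin d → ℝ))
    (hadj : ∀ t ∈ Icc 1 T,
      (p (t + 1) - ν (t + 1)) ⬝ᵥ (A t).mulVec (p (t + 1) - ν (t + 1)) ≤
      ((p t - (1 / γ) • (EuclideanSpace.equiv (Fin d) ℝ).symm ((A t)⁻¹.mulVec (g t (p t)))) - ν t)
        ⬝ᵥ (A t).mulVec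
          ((p t - (1 / γ) • (EuclideanSpace.equiv (Fin d) ℝ).symm ((A t)⁻¹.mulVec (g t (p t))))
            - ν t))
    (μstar : ℕ → EuclideanSpace ℝ (Fin d)) (hμstarK : ∀ t ∈ Icc 1 T, μstar t ∈ K)
    (hmin : ∀ t ∈ Icc 1 T, ∀ y ∈ K, ℓ t (μstar t) ≤ ℓ t y)
    (hνgood : ∀ t ∈ Icc 1 T,
      ℓ t (ν (t + 1)) - ℓ t (μstar t) ≤ G ^ 2 * (1 + Real.log T) / (lam * T)) :
    ∑ t ∈ Icc 1 T, ℓ t (p t) - ∑ t ∈ Icc 1 T, ℓ t (μstar t) ≤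
      G * ∑ t ∈ Icc 1 T, ‖ν (t + 1) - ν t‖ - lam * ∑ t ∈ Icc 1 T, ‖ν (t + 1) - ν t‖ ^ 2
        + 2 * (G ^ 2 / lam * (d + 1) + d * G * D) * (1 + Real.log T) :=
  dons_dynamic_regret_general K D hD hdiam T hT lam G hlam hG ℓ g hsc hGb α γ ε hα hγ hε p ν hpK hνK
    A hA0 hArec hadj μstar hνgood
end

section
/- Let K ⊆ ℝ^d be a convex set of diameter at most D with D ≥ 1/√2, T ≥ 1, λ, G > 0, and let ℓ₁, …, ℓ_T : ℝ^d → ℝ be differentiable functions that are λ-strongly convex on K in the paper's convention (ℓ_t(μ) − ℓ_t(μ₀) ≤ ⟨∇ℓ_t(μ), μ − μ₀⟩ − λ‖μ − μ₀‖² for μ, μ₀ ∈ K) with ‖∇ℓ_t(x)‖ ≤ G for all x ∈ K. Set ε := 2/D² and η := D/√2; write ∇_t := ∇ℓ_t(μ̂_t), G₀ := ε·I_d, G_t := G_{t−1} + ∇_t∇_tᵀ, H_t := G_t^{1/2}, μ̂_{temp,t+1} := μ̂_t − η·H_t⁻¹∇_t. Suppose μ̂₁, …, μ̂_{T+1} ∈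 K satisfy, for every 1 ≤ t ≤ T, the ADJUST contraction (μ̂_{t+1} − ν_{t+1})ᵀ H_t (μ̂_{t+1} − ν_{t+1}) ≤ (μ̂_{temp,t+1} − ν_t)ᵀ H_t (μ̂_{temp,t+1} − ν_t), and suppose ν₁, …, ν_{T+1} ∈ K satisfy ℓ_t(ν_{t+1}) − ℓ_t(μ*_t) ≤ G²(1 + log T)/(λT) for every t, where μ*_t ∈ K minimises ℓ_t over K. Then Σ_{t=1}^{T} ℓ_t(μ̂_t) − Σ_{t=1}^{T} ℓ_t(μ*_t) ≤ G·Σ_{t=1}^{T}‖ν_{t+1} − ν_t‖ − λ·Σ_{t=1}^{T}‖ν_{t+1} − ν_t‖² + √2·D·(1 + Tr(H_T)) + (G²/λ)·(1 + log T). -/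
/-!
Split `ℓ_t(μ̂_t) - ℓ_t(μ*_t)` at `ν_t` and `ν_{t+1}`: strong convexity bounds it by
`⟨∇_t, μ̂_t - ν_t⟩ + G‖ν_{t+1} - ν_t‖ - λ‖ν_{t+1} - ν_t‖²` plus the advice error
`ℓ_t(ν_{t+1}) - ℓ_t(μ*_t)`. The linear terms are the AdaGrad regret against the moving comparator
`ν`. With `x_t = μ̂_t - ν_t`, expanding the ADJUST contraction gives
`2η⟨∇_t, x_t⟩ ≤ ‖x_t‖²_{H_t} - ‖x_{t+1}‖²_{H_t} + η²‖∇_t‖²_{H_t⁻¹}`. Since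
`Tr(H_t⁻¹(H_{t-1} - H_t)²) ≥ 0` and `H_t² = H_{t-1}² + ∇_t∇_tᵀ`, the last term is at most
`2η²(Tr H_t - Tr H_{t-1})`; since the square root is operator monotone, `H_{t-1} ≤ H_t`, so
`‖x_t‖²_{H_t} - ‖x_t‖²_{H_{t-1}} ≤ D²(Tr H_t - Tr H_{t-1})`. Telescoping gives
`2η Σ⟨∇_t, x_t⟩ ≤ (D² + 2η²) Tr H_T`, and `η = D/√2` makes this `√2 D Tr H_T`.
-/

open Matrix RealInnerProductSpace Finset

namespace Matrix

variable {n : Type*} [Fintype n]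

lemma PosSemidef.exists_eq_conjTranspose_mul_self {M : Matrix n n ℝ}
    (hM : M.PosSemidef) : ∃ B : Matrix n n ℝ, M = Bᴴ * B := by
  classical
  open scoped MatrixOrder in exact CStarAlgebra.nonneg_iff_eq_star_mul_self.mp hM.nonneg

lemma IsHermitian.dotProduct_mulVec_eq_mulVec_dotProduct {M : Matrix n n ℝ} (hM : M.IsHermitian)
    (v w : n → ℝ) : v ⬝ᵥ M *ᵥ w = M *ᵥ v ⬝ᵥ w := by
  rw [dotProduct_mulVec, ← vecMul_transpose, ← conjTranspose_eq_transpose_of_trivial, hM.eq]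

lemma trace_mul_vecMulVec_self (M : Matrix n n ℝ) (v : n → ℝ) :
    (M * vecMulVec v v).trace = v ⬝ᵥ M *ᵥ v := by
  rw [mul_vecMulVec, trace_vecMulVec, dotProduct_comm]

lemma posSemidef_vecMulVec_self (v : n → ℝ) : (vecMulVec v v).PosSemidef := by
  simpa using posSemidef_vecMulVec_self_star v

lemma PosSemidef.trace_mul_nonneg {P Q : Matrix n n ℝ} (hP : P.PosSemidef)
    (hQ : Q.PosSemidef) : 0 ≤ (P * Q).trace := by
  obtain ⟨B, rfl⟩ := hP.exists_eq_conjTranspose_mul_self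
  rw [Matrix.mul_assoc, trace_mul_comm]
  exact (hQ.mul_mul_conjTranspose_same B).trace_nonneg

lemma PosSemidef.dotProduct_mulVec_le_mul_trace {M : Matrix n n ℝ} (hM : M.PosSemidef)
    {x : n → ℝ} {c : ℝ} (hx : x ⬝ᵥ x ≤ c) : x ⬝ᵥ M *ᵥ x ≤ c * M.trace := by
  obtain ⟨B, rfl⟩ := hM.exists_eq_conjTranspose_mul_self
  have hquad : x ⬝ᵥ (Bᴴ * B) *ᵥ x = ∑ i, (∑ j, B i j * x j) ^ 2 := by
    rw [← mulVec_mulVec, dotProduct_mulVec, vecMul_conjTranspose]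
    simp [dotProduct, sq, mulVec]
  have htrace : (Bᴴ * B).trace = ∑ i, ∑ j, B i j ^ 2 := by
    rw [trace_mul_comm]
    simp [trace, mul_apply, sq]
  have hCS (i : n) : (∑ j, B i j * x j) ^ 2 ≤ (∑ j, B i j ^ 2) * (x ⬝ᵥ x) := by
    simpa [dotProduct, sq] using sum_mul_sq_le_sq_mul_sq univ (B i) x
  calc x ⬝ᵥ (Bᴴ * B) *ᵥ x ≤ (Bᴴ * B).trace * (x ⬝ᵥ x) := by
        rw [hquad, htrace, sum_mul]; exact sum_le_sum fun i _ => hCS i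
    _ ≤ c * (Bᴴ * B).trace := by
        rw [mul_comm]; exact mul_le_mul_of_nonneg_right hx hM.trace_nonneg

lemma PosSemidef.sub_of_mul_self_sub {A B : Matrix n n ℝ} (hA : A.PosSemidef)
    (hB : B.PosSemidef) (h : (B * B - A * A).PosSemidef) : (B - A).PosSemidef := by
  classical
  have hBA : (B - A).IsHermitian := hB.1.sub hA.1
  refine hBA.posSemidef_iff_eigenvalues_nonneg.mpr fun i => show (0 : ℝ) ≤ _ from ?_
  by_contra! hμ
  set μ := hBA.eigenvalues i
  set v : n → ℝ := ⇑(hBA.eigenvectorBasis i)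
  have hv : v ⬝ᵥ v = 1 := by
    have := hBA.eigenvectorBasis.inner_eq_one i
    rwa [EuclideanSpace.inner_eq_star_dotProduct, star_trivial] at this
  have hAv : A *ᵥ v = B *ᵥ v - μ • v := by
    rw [eq_sub_iff_add_eq, ← hBA.mulVec_eigenvectorBasis i, sub_mulVec]
    abel
  -- `v ⬝ᵥ (B² - A²) *ᵥ v = ‖Bv‖² - ‖Bv - μv‖²`, which is negative when `μ < 0`.
  have hquad : v ⬝ᵥ (B * B - A * A) *ᵥ v = 2 * μ * (v ⬝ᵥ B *ᵥ v) - μ ^ 2 := by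
    rw [sub_mulVec, dotProduct_sub, ← mulVec_mulVec, ← mulVec_mulVec,
      hB.1.dotProduct_mulVec_eq_mulVec_dotProduct, hA.1.dotProduct_mulVec_eq_mulVec_dotProduct,
      hAv]
    simp only [sub_dotProduct, dotProduct_sub, smul_dotProduct, dotProduct_smul, smul_eq_mul,
      hv, dotProduct_comm (B *ᵥ v) v]
    ring
  have h1 := h.dotProduct_mulVec_nonneg v
  have h2 := hB.dotProduct_mulVec_nonneg v
  simp only [star_trivial] at h1 h2
  nlinarith

variable [DecidableEq n]

lemma PosSemidef.posDef_of_mul_self {H : Matrix n n ℝ} (hH : H.PosSemidef)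
    (h : (H * H).PosDef) : H.PosDef :=
  hH.posDef_iff_isUnit.mpr (isUnit_of_mul_isUnit_left h.isUnit)

lemma PosDef.dotProduct_mulVec_sub_smul_inv_mulVec {H : Matrix n n ℝ} (hH : H.PosDef)
    (x g : n → ℝ) (η : ℝ) :
    (x - η • H⁻¹ *ᵥ g) ⬝ᵥ H *ᵥ (x - η • H⁻¹ *ᵥ g) =
      x ⬝ᵥ H *ᵥ x - 2 * η * (g ⬝ᵥ x) + η ^ 2 * (g ⬝ᵥ H⁻¹ *ᵥ g) := by
  have hHinv : H *ᵥ H⁻¹ *ᵥ g = g := by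
    rw [mulVec_mulVec, mul_nonsing_inv _ hH.det_pos.ne'.isUnit, one_mulVec]
  have hsymm : H⁻¹ *ᵥ g ⬝ᵥ H *ᵥ x = g ⬝ᵥ x := by
    rw [hH.isHermitian.dotProduct_mulVec_eq_mulVec_dotProduct, hHinv]
  simp only [mulVec_sub, mulVec_smul, hHinv, sub_dotProduct, dotProduct_sub, smul_dotProduct,
    dotProduct_smul, hsymm, smul_eq_mul, dotProduct_comm x g, dotProduct_comm (H⁻¹ *ᵥ g) g]
  ring

lemma PosDef.two_mul_trace_sub_trace_le {A B : Matrix n n ℝ} (hA : A.PosDef)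
    (hB : B.IsHermitian) : 2 * B.trace - A.trace ≤ (A⁻¹ * (B * B)).trace := by
  have hdet : IsUnit A.det := hA.det_pos.ne'.isUnit
  have hsq : ((B - A) * (B - A)).PosSemidef := by
    have := posSemidef_conjTranspose_mul_self (B - A)
    rwa [(hB.sub hA.isHermitian).eq] at this
  have h := hA.inv.posSemidef.trace_mul_nonneg hsq
  have hexpand : A⁻¹ * ((B - A) * (B - A)) =
      A⁻¹ * (B * B) - A⁻¹ * B * A - A⁻¹ * A * B + A⁻¹ * A * A := by
    noncomm_ring
  rw [hexpand, trace_add, trace_sub, trace_sub, trace_mul_cycle, mul_nonsing_inv _ hdet,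
    nonsing_inv_mul _ hdet, Matrix.one_mul, Matrix.one_mul] at h
  linarith

lemma PosDef.dotProduct_inv_mulVec_le_two_mul_trace_sub {H H' : Matrix n n ℝ} (hH : H.PosDef)
    (hH' : H'.IsHermitian) {g : n → ℝ} (hsq : H * H = H' * H' + vecMulVec g g) :
    g ⬝ᵥ H⁻¹ *ᵥ g ≤ 2 * (H.trace - H'.trace) := by
  have htrace : (H⁻¹ * (H * H)).trace = H.trace := by
    rw [← Matrix.mul_assoc, nonsing_inv_mul _ hH.det_pos.ne'.isUnit, Matrix.one_mul]
  rw [hsq, Matrix.mul_add, trace_add, trace_mul_vecMulVec_self] at htrace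
  linarith [hH.two_mul_trace_sub_trace_le hH']

end Matrix

section AdaGrad

variable {n : Type*} [Fintype n] [DecidableEq n]

theorem adagrad_step_le {H H' : Matrix n n ℝ} (hH : H.PosDef) (hH' : H'.PosSemidef)
    {g x x' : n → ℝ} {η D : ℝ} (hsq : H * H = H' * H' + vecMulVec g g) (hx : x ⬝ᵥ x ≤ D ^ 2)
    (hadj : x' ⬝ᵥ H *ᵥ x' ≤ (x - η • H⁻¹ *ᵥ g) ⬝ᵥ H *ᵥ (x - η • H⁻¹ *ᵥ g)) :
    2 * η * (g ⬝ᵥ x) + x' ⬝ᵥ H *ᵥ x' ≤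
      x ⬝ᵥ H' *ᵥ x + (D ^ 2 + 2 * η ^ 2) * (H.trace - H'.trace) := by
  have hmono : (H - H').PosSemidef :=
    hH'.sub_of_mul_self_sub hH.posSemidef (by simpa [hsq] using posSemidef_vecMulVec_self g)
  have hgrowth : x ⬝ᵥ H *ᵥ x - x ⬝ᵥ H' *ᵥ x ≤ D ^ 2 * (H.trace - H'.trace) := by
    simpa [sub_mulVec, dotProduct_sub, trace_sub] using hmono.dotProduct_mulVec_le_mul_trace hx
  have hgrad := mul_le_mul_of_nonneg_left
    (hH.dotProduct_inv_mulVec_le_two_mul_trace_sub hH'.1 hsq) (sq_nonneg η)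
  rw [hH.dotProduct_mulVec_sub_smul_inv_mulVec] at hadj
  linarith

theorem adagrad_two_mul_sum_dotProduct_le {Gm H : ℕ → Matrix n n ℝ} {g x : ℕ → n → ℝ}
    {ε η D : ℝ} (T : ℕ) (hε : 0 < ε) (hG0 : Gm 0 = ε • 1)
    (hGrec : ∀ t ∈ Icc 1 T, Gm t = Gm (t - 1) + vecMulVec (g t) (g t))
    (hH : ∀ t ≤ T, (H t).PosSemidef ∧ H t * H t = Gm t)
    (hx : ∀ t ∈ Icc 1 (T + 1), x t ⬝ᵥ x t ≤ D ^ 2)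
    (hadj : ∀ t ∈ Icc 1 T, x (t + 1) ⬝ᵥ H t *ᵥ x (t + 1) ≤
      (x t - η • (H t)⁻¹ *ᵥ g t) ⬝ᵥ H t *ᵥ (x t - η • (H t)⁻¹ *ᵥ g t)) :
    2 * η * ∑ t ∈ Icc 1 T, g t ⬝ᵥ x t ≤ (D ^ 2 + 2 * η ^ 2) * (H T).trace := by
  have hGm : ∀ t ≤ T, (Gm t).PosDef := by
    intro t
    induction t with
    | zero => intro _; rw [hG0]; exact PosDef.one.smul hε
    | succ t ih =>
      intro ht
      rw [hGrec (t + 1) (mem_Icc.mpr ⟨by omega, ht⟩), Nat.add_sub_cancel]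
      exact (ih (by omega)).add_posSemidef (posSemidef_vecMulVec_self _)
  have hHpd (t : ℕ) (ht : t ≤ T) : (H t).PosDef :=
    (hH t ht).1.posDef_of_mul_self ((hH t ht).2 ▸ hGm t ht)
  have hpotential : ∀ S ≤ T,
      2 * η * ∑ t ∈ Icc 1 S, g t ⬝ᵥ x t + x (S + 1) ⬝ᵥ H S *ᵥ x (S + 1) ≤
        (D ^ 2 + 2 * η ^ 2) * (H S).trace := by
    intro S
    induction S with
    | zero =>
      intro _
      have h0 := (hH 0 (Nat.zero_le T)).1
      have := h0.dotProduct_mulVec_le_mul_trace (hx 1 (by simp))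
      have := mul_nonneg (sq_nonneg η) h0.trace_nonneg
      simp only [Icc_eq_empty_of_lt zero_lt_one, sum_empty, zero_add]
      linarith
    | succ S ih =>
      intro hS
      have hsq : H (S + 1) * H (S + 1) = H S * H S + vecMulVec (g (S + 1)) (g (S + 1)) := by
        rw [(hH _ hS).2, (hH S (by omega)).2, hGrec (S + 1) (mem_Icc.mpr ⟨by omega, hS⟩),
          Nat.add_sub_cancel]
      have := adagrad_step_le (hHpd (S + 1) hS) (hH S (by omega)).1 hsq
        (hx (S + 1) (mem_Icc.mpr ⟨by omega, by omega⟩))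
        (hadj (S + 1) (mem_Icc.mpr ⟨by omega, hS⟩))
      rw [sum_Icc_succ_top (by omega), mul_add]
      linarith [ih (by omega)]
  have hlast := (hH T le_rfl).1.dotProduct_mulVec_nonneg (x (T + 1))
  simp only [star_trivial] at hlast
  linarith [hpotential T le_rfl]

end AdaGrad

lemma EuclideanSpace.real_inner_eq_dotProduct {ι : Type*} [Fintype ι]
    (u v : EuclideanSpace ℝ ι) : ⟪u, v⟫ = (u : ι → ℝ) ⬝ᵥ v := by
  simp [EuclideanSpace.inner_eq_star_dotProduct, dotProduct_comm]

theorem regret_step_le_of_strongConvexity {E : Type*} [NormedAddCommGroup E]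
    [InnerProductSpace ℝ E] {f : E → ℝ} {f' : E → E} {K : Set E} {lam G : ℝ} (hlam : 0 ≤ lam)
    (hsc : ∀ μ ∈ K, ∀ μ₀ ∈ K, f μ - f μ₀ ≤ ⟪f' μ, μ - μ₀⟫ - lam * ‖μ - μ₀‖ ^ 2)
    {x v v' m : E} (hx : x ∈ K) (hv : v ∈ K) (hv' : v' ∈ K) (hG : ‖f' v‖ ≤ G) :
    f x - f m ≤ ⟪f' x, x - v⟫ + (G * ‖v' - v‖ - lam * ‖v' - v‖ ^ 2) + (f v' - f m) := by
  have hxv := hsc x hx v hv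
  have hvv' := hsc v hv v' hv'
  have hinner : ⟪f' v, v - v'⟫ ≤ G * ‖v' - v‖ := by
    rw [norm_sub_rev]
    exact (real_inner_le_norm _ _).trans (mul_le_mul_of_nonneg_right hG (norm_nonneg _))
  rw [norm_sub_rev v v'] at hvv'
  nlinarith [mul_nonneg hlam (sq_nonneg ‖x - v‖)]

theorem dadagrad_dynamic_regret_general {d : ℕ}
    (K : Set (EuclideanSpace ℝ (Fin d)))
    (D : ℝ) (hD : 1 / Real.sqrt 2 ≤ D) (hdiam : ∀ x ∈ K, ∀ y ∈ K, ‖x - y‖ ≤ D)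
    (T : ℕ) (hT : 1 ≤ T) (lam G : ℝ) (hlam : 0 < lam)
    (η : ℝ) (hη : η = D / Real.sqrt 2)
    (ℓ : ℕ → EuclideanSpace ℝ (Fin d) → ℝ)
    (g : ℕ → EuclideanSpace ℝ (Fin d) → EuclideanSpace ℝ (Fin d))
    (hsc : ∀ t ∈ Icc 1 T, ∀ μ ∈ K, ∀ μ₀ ∈ K,
      ℓ t μ - ℓ t μ₀ ≤ ⟪g t μ, μ - μ₀⟫ - lam * ‖μ - μ₀‖ ^ 2)
    (hGb : ∀ t ∈ Icc 1 T, ∀ x ∈ K, ‖g t x‖ ≤ G)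
    (ε : ℝ) (hε : ε = 2 / D ^ 2)
    (p ν : ℕ → EuclideanSpace ℝ (Fin d))
    (hpK : ∀ t ∈ Icc 1 (T + 1), p t ∈ K) (hνK : ∀ t ∈ Icc 1 (T + 1), ν t ∈ K)
    (Gm H : ℕ → Matrix (Fin d) (Fin d) ℝ)
    (hG0 : Gm 0 = ε • 1)
    (hGrec : ∀ t ∈ Icc 1 T,
      Gm t = Gm (t - 1) + Matrix.vecMulVec (g t (p t) : Fin d → ℝ) (g t (p t) : Fin d → ℝ))
    (hH : ∀ t ≤ T, (H t).PosSemidef ∧ H t * H t = Gm t)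
    (hadj : ∀ t ∈ Icc 1 T,
      (p (t + 1) - ν (t + 1)) ⬝ᵥ (H t).mulVec (p (t + 1) - ν (t + 1)) ≤
      ((p t - η • (EuclideanSpace.equiv (Fin d) ℝ).symm ((H t)⁻¹.mulVec (g t (p t)))) - ν t)
        ⬝ᵥ (H t).mulVec
          ((p t - η • (EuclideanSpace.equiv (Fin d) ℝ).symm ((H t)⁻¹.mulVec (g t (p t))))
            - ν t))
    (μstar : ℕ → EuclideanSpace ℝ (Fin d))
    (hνgood : ∀ t ∈ Icc 1 T,
      ℓ t (ν (t + 1)) - ℓ t (μstar t) ≤ G ^ 2 * (1 + Real.log T) / (lam * T)) :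
    ∑ t ∈ Icc 1 T, ℓ t (p t) - ∑ t ∈ Icc 1 T, ℓ t (μstar t) ≤
      G * ∑ t ∈ Icc 1 T, ‖ν (t + 1) - ν t‖ - lam * ∑ t ∈ Icc 1 T, ‖ν (t + 1) - ν t‖ ^ 2
        + Real.sqrt 2 * D * (1 + (H T).trace) + G ^ 2 / lam * (1 + Real.log T) := by
  have hDpos : 0 < D := lt_of_lt_of_le (by positivity) hD
  have hadagrad := adagrad_two_mul_sum_dotProduct_le T
    (x := fun t => (p t - ν t : EuclideanSpace ℝ (Fin d))) (by rw [hε]; positivity) hG0 hGrec hH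
    (fun t ht => by
      rw [← EuclideanSpace.real_inner_eq_dotProduct, real_inner_self_eq_norm_sq]
      exact pow_le_pow_left₀ (norm_nonneg _) (hdiam _ (hpK t ht) _ (hνK t ht)) 2)
    (fun t ht => by simpa [sub_right_comm] using hadj t ht)
  have hlinear : ∑ t ∈ Icc 1 T, ⟪g t (p t), p t - ν t⟫ ≤ Real.sqrt 2 * D * (H T).trace := by
    have hη₀ : 0 < 2 * η := by rw [hη]; positivity
    have hbalance : D ^ 2 + 2 * η ^ 2 = 2 * η * (Real.sqrt 2 * D) := by
      rw [hη, div_pow, Real.sq_sqrt zero_le_two]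
      field_simp
      norm_num
    simp only [EuclideanSpace.real_inner_eq_dotProduct]
    rw [hbalance] at hadagrad
    exact le_of_mul_le_mul_left (by linarith) hη₀
  have hstep (t : ℕ) (ht : t ∈ Icc 1 T) := by
    have ht' : t ∈ Icc 1 (T + 1) := Icc_subset_Icc_right (Nat.le_succ T) ht
    have ht'' : t + 1 ∈ Icc 1 (T + 1) := by simp only [mem_Icc] at ht ⊢; omega
    exact regret_step_le_of_strongConvexity hlam.le (hsc t ht) (m := μstar t)
      (hpK t ht') (hνK t ht') (hνK (t + 1) ht'') (hGb t ht _ (hνK t ht'))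
  have hadvice :
      ∑ t ∈ Icc 1 T, (ℓ t (ν (t + 1)) - ℓ t (μstar t)) ≤ G ^ 2 / lam * (1 + Real.log T) := by
    refine (sum_le_sum hνgood).trans_eq ?_
    rw [sum_const, Nat.card_Icc, Nat.add_sub_cancel, nsmul_eq_mul]
    field_simp
  have hsum := sum_le_sum hstep
  rw [sum_add_distrib, sum_add_distrib] at hsum
  rw [← sum_sub_distrib, mul_sum, mul_sum, ← sum_sub_distrib, mul_one_add]
  linarith [mul_nonneg (Real.sqrt_nonneg 2) hDpos.le]

/-- Theorem 5 (dynamic regret of Dynamic AdaGrad against the true minimisers): for `λ`-strongly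
convex losses (paper's convention) with `G`-bounded gradients, with `ε = 2/D²`, `η = D/√2`,
AdaGrad matrices `G_t` and their positive semidefinite square roots `H_t`, ADJUST contraction in
the `H_t`-norm, and advice `ν` satisfying `ℓ_t(ν_{t+1}) − ℓ_t(μ*_t) ≤ G²(1 + log T)/(λT)`, we get
`Σℓ_t(μ̂_t) − Σℓ_t(μ*_t) ≤ G·P_T(ν) − λ·S_T(ν) + √2·D·(1 + Tr(H_T)) + (G²/λ)(1 + log T)`. -/
theorem dadagrad_dynamic_regret {d : ℕ}
    (K : Set (EuclideanSpace ℝ (Fin d))) (hK : Convex ℝ K)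
    (D : ℝ) (hD : 1 / Real.sqrt 2 ≤ D) (hdiam : ∀ x ∈ K, ∀ y ∈ K, ‖x - y‖ ≤ D)
    (T : ℕ) (hT : 1 ≤ T) (lam G : ℝ) (hlam : 0 < lam) (hG : 0 < G)
    (η : ℝ) (hη : η = D / Real.sqrt 2)
    (ℓ : ℕ → EuclideanSpace ℝ (Fin d) → ℝ)
    (g : ℕ → EuclideanSpace ℝ (Fin d) → EuclideanSpace ℝ (Fin d))
    (hdiff : ∀ t, ∀ x, HasGradientAt (ℓ t) (g t x) x)
    (hsc : ∀ t ∈ Icc 1 T, ∀ μ ∈ K, ∀ μ₀ ∈ K,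
      ℓ t μ - ℓ t μ₀ ≤ ⟪g t μ, μ - μ₀⟫ - lam * ‖μ - μ₀‖ ^ 2)
    (hGb : ∀ t ∈ Icc 1 T, ∀ x ∈ K, ‖g t x‖ ≤ G)
    (ε : ℝ) (hε : ε = 2 / D ^ 2)
    (p ν : ℕ → EuclideanSpace ℝ (Fin d))
    (hpK : ∀ t ∈ Icc 1 (T + 1), p t ∈ K) (hνK : ∀ t ∈ Icc 1 (T + 1), ν t ∈ K)
    (Gm H : ℕ → Matrix (Fin d) (Fin d) ℝ)
    (hG0 : Gm 0 = ε • 1)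
    (hGrec : ∀ t ∈ Icc 1 T,
      Gm t = Gm (t - 1) + Matrix.vecMulVec (g t (p t) : Fin d → ℝ) (g t (p t) : Fin d → ℝ))
    (hH : ∀ t ≤ T, (H t).PosSemidef ∧ H t * H t = Gm t)
    (hadj : ∀ t ∈ Icc 1 T,
      (p (t + 1) - ν (t + 1)) ⬝ᵥ (H t).mulVec (p (t + 1) - ν (t + 1)) ≤
      ((p t - η • (EuclideanSpace.equiv (Fin d) ℝ).symm ((H t)⁻¹.mulVec (g t (p t)))) - ν t)
        ⬝ᵥ (H t).mulVec
          ((p t - η • (EuclideanSpace.equiv (Fin d) ℝ).symm ((H t)⁻¹.mulVec (g t (p t))))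
            - ν t))
    (μstar : ℕ → EuclideanSpace ℝ (Fin d)) (hμstarK : ∀ t ∈ Icc 1 T, μstar t ∈ K)
    (hmin : ∀ t ∈ Icc 1 T, ∀ y ∈ K, ℓ t (μstar t) ≤ ℓ t y)
    (hνgood : ∀ t ∈ Icc 1 T,
      ℓ t (ν (t + 1)) - ℓ t (μstar t) ≤ G ^ 2 * (1 + Real.log T) / (lam * T)) :
    ∑ t ∈ Icc 1 T, ℓ t (p t) - ∑ t ∈ Icc 1 T, ℓ t (μstar t) ≤
      G * ∑ t ∈ Icc 1 T, ‖ν (t + 1) - ν t‖ - lam * ∑ t ∈ Icc 1 T, ‖ν (t + 1) - ν t‖ ^ 2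
        + Real.sqrt 2 * D * (1 + (H T).trace) + G ^ 2 / lam * (1 + Real.log T) :=
  dadagrad_dynamic_regret_general K D hD hdiam T hT lam G hlam η hη ℓ g hsc hGb ε hε p ν hpK hνK Gm
    H hG0 hGrec hH hadj μstar hνgood
end
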